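/- Let L̂ : BUC_η → ℝⁿ be bounded linear, λ ∈ ℂ with Re(λ) > -η and det Δ(λ) ≠ 0, where Δ(λ) = λI - L̂(e^{λ·}I). Then for every (α, φ) ∈ ℝⁿ × BUC_η, the function ψ(θ) = ∫_θ^0 e^{λ(θ-s)} φ(s) ds + e^{λθ} Δ(λ)^{-1} [α + φ(0) + L̂(θ ↦ ∫_θ^0 e^{λ(θ-s)}φ(s) ds)] belongs to BUC_η¹ and satisfies λψ - ψ' = φ and ψ'(0) = L̂(ψ) + α; i.e., (0,ψ) = (λI - (A+L))^{-1}(α,φ). -/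

import Mathlib

open Set Filter Topology

noncomputable def etaNorm (η : ℝ) {F : Type*} [NormedAddCommGroup F] (φ : ℝ → F) : ℝ :=
  sSup ((fun θ => Real.exp (η * θ) * ‖φ θ‖) '' Set.Iic 0)

def BUCmem (η : ℝ) {F : Type*} [NormedAddCommGroup F] [NormedSpace ℝ F] (φ : ℝ → F) : Prop :=
  ContinuousOn φ (Set.Iic 0) ∧
  BddAbove ((fun θ => Real.exp (η * θ) * ‖φ θ‖) '' Set.Iic 0) ∧
  UniformContinuousOn (fun θ => Real.exp (η * θ) • φ θ) (Set.Iic 0)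

def BUC1mem (η : ℝ) {F : Type*} [NormedAddCommGroup F] [NormedSpace ℝ F] (φ φ' : ℝ → F) : Prop :=
  BUCmem η φ ∧ BUCmem η φ' ∧ ∀ θ ≤ (0:ℝ), HasDerivWithinAt φ (φ' θ) (Set.Iic 0) θ

open Matrix

/-- The characteristic matrix `Δ(λ) = λI - L̂(e^{λ·}I)`. -/
noncomputable def charMatrix {n : ℕ} (Lhat : (ℝ → (Fin n → ℂ)) →ₗ[ℂ] (Fin n → ℂ))
    (z : ℂ) : Matrix (Fin n) (Fin n) ℂ :=
  Matrix.of fun i j =>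
    (if i = j then z else 0) -
      Lhat (fun θ => fun k => if k = j then Complex.exp (z * θ) else 0) i

/-! Variation of constants: on `(-∞, 0]` the solutions of `ψ' = λψ - φ` are
`ψ(θ) = ∫_θ^0 e^{λ(θ-s)} φ(s) ds + e^{λθ} c`. For `Re λ > -η` the weight `e^{ηθ}` turns the kernel
into the integrable `e^{(η + Re λ)(θ-s)}`, so `ψ` and `ψ'` are `η`-bounded, and a bounded weighted
derivative makes `e^{η·} ψ` Lipschitz, hence uniformly continuous. Since
`L̂(e^{λ·} c) = λc - Δ(λ) c`, the boundary condition `ψ'(0) = L̂ψ + α` is the linear system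
`Δ(λ) c = α + φ(0) + L̂(∫_·^0 e^{λ(·-s)} φ(s) ds)`, solved by the choice of `c`. -/

def WeightedBdd (η : ℝ) {F : Type*} [NormedAddCommGroup F] (f : ℝ → F) : Prop :=
  BddAbove ((fun θ => Real.exp (η * θ) * ‖f θ‖) '' Iic 0)

section WeightedSpace

variable {η : ℝ} {F : Type*} [NormedAddCommGroup F]

lemma weightedBdd_iff {f : ℝ → F} :
    WeightedBdd η f ↔ ∃ B, ∀ θ ≤ (0:ℝ), Real.exp (η * θ) * ‖f θ‖ ≤ B := by
  simp [WeightedBdd, bddAbove_def]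

lemma WeightedBdd.sub {f g : ℝ → F} (hf : WeightedBdd η f) (hg : WeightedBdd η g) :
    WeightedBdd η (f - g) := by
  obtain ⟨B, hB⟩ := weightedBdd_iff.1 hf
  obtain ⟨B', hB'⟩ := weightedBdd_iff.1 hg
  refine weightedBdd_iff.2 ⟨B + B', fun θ hθ => ?_⟩
  calc Real.exp (η * θ) * ‖f θ - g θ‖ ≤ Real.exp (η * θ) * (‖f θ‖ + ‖g θ‖) := by
        gcongr; exact norm_sub_le _ _
    _ ≤ B + B' := by linarith [hB θ hθ, hB' θ hθ]

lemma WeightedBdd.const_smul {𝕜 : Type*} [NormedField 𝕜] [NormedSpace 𝕜 F] (c : 𝕜) {f : ℝ → F}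
    (hf : WeightedBdd η f) : WeightedBdd η (c • f) := by
  obtain ⟨B, hB⟩ := weightedBdd_iff.1 hf
  refine weightedBdd_iff.2 ⟨‖c‖ * B, fun θ hθ => ?_⟩
  calc Real.exp (η * θ) * ‖(c • f) θ‖ = ‖c‖ * (Real.exp (η * θ) * ‖f θ‖) := by
        rw [Pi.smul_apply, norm_smul]; ring
    _ ≤ ‖c‖ * B := by gcongr; exact hB θ hθ

variable [NormedSpace ℝ F]

lemma BUCmem.sub {f g : ℝ → F} (hf : BUCmem η f) (hg : BUCmem η g) : BUCmem η (f - g) := by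
  refine ⟨hf.1.sub hg.1, WeightedBdd.sub hf.2.1 hg.2.1, ?_⟩
  have h := hf.2.2
  have h' := hg.2.2
  rw [uniformContinuousOn_iff_restrict] at h h' ⊢
  convert h.sub h' using 1
  ext θ
  exact smul_sub _ _ _

lemma BUCmem.const_smul {𝕜 : Type*} [NormedField 𝕜] [NormedSpace 𝕜 F] [SMulCommClass ℝ 𝕜 F]
    (c : 𝕜) {f : ℝ → F} (hf : BUCmem η f) : BUCmem η (c • f) := by
  refine ⟨hf.1.const_smul c, WeightedBdd.const_smul c hf.2.1, ?_⟩
  have h := hf.2.2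
  rw [uniformContinuousOn_iff_restrict] at h ⊢
  convert h.const_smul c using 1
  ext θ
  exact smul_comm _ _ _

lemma BUCmem.of_hasDerivWithinAt {f f' : ℝ → F}
    (hderiv : ∀ θ ≤ (0:ℝ), HasDerivWithinAt f (f' θ) (Iic 0) θ)
    (hf : WeightedBdd η f) (hf' : WeightedBdd η f') : BUCmem η f := by
  obtain ⟨B, hB⟩ := weightedBdd_iff.1 hf
  obtain ⟨B', hB'⟩ := weightedBdd_iff.1 hf'
  refine ⟨fun θ hθ => (hderiv θ hθ).continuousWithinAt, hf, ?_⟩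
  have hweighted : ∀ θ ∈ Iic (0:ℝ), HasDerivWithinAt (fun θ => Real.exp (η * θ) • f θ)
      (Real.exp (η * θ) • f' θ + (η * Real.exp (η * θ)) • f θ) (Iic 0) θ := fun θ hθ => by
    have hexp : HasDerivAt (fun θ => Real.exp (η * θ)) (η * Real.exp (η * θ)) θ := by
      simpa [mul_comm] using ((hasDerivAt_id θ).const_mul η).exp
    exact hexp.hasDerivWithinAt.smul (hderiv θ hθ)
  have hbound : ∀ θ ∈ Iic (0:ℝ),
      ‖Real.exp (η * θ) • f' θ + (η * Real.exp (η * θ)) • f θ‖₊ ≤ (B' + |η| * B).toNNReal := by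
    intro θ hθ
    rw [← NNReal.coe_le_coe, coe_nnnorm]
    refine le_trans ?_ (Real.le_coe_toNNReal _)
    calc _ ≤ ‖Real.exp (η * θ) • f' θ‖ + ‖(η * Real.exp (η * θ)) • f θ‖ := norm_add_le _ _
      _ = Real.exp (η * θ) * ‖f' θ‖ + |η| * (Real.exp (η * θ) * ‖f θ‖) := by
        rw [norm_smul, norm_smul, norm_mul, Real.norm_eq_abs, Real.norm_eq_abs,
          abs_of_pos (Real.exp_pos _)]
        ring
      _ ≤ B' + |η| * B := by gcongr; exacts [hB' θ hθ, hB θ hθ]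
  exact ((convex_Iic 0).lipschitzOnWith_of_nnnorm_hasDerivWithin_le hweighted
    hbound).uniformContinuousOn

end WeightedSpace

lemma integral_exp_mul_sub_le {r : ℝ} (hr : 0 < r) (θ : ℝ) :
    ∫ s in θ..(0:ℝ), Real.exp (r * (θ - s)) ≤ 1 / r := by
  have hprim : ∀ s ∈ uIcc θ (0:ℝ),
      HasDerivAt (fun s => -Real.exp (r * (θ - s)) / r) (Real.exp (r * (θ - s))) s := by
    intro s _
    have h : HasDerivAt (fun s => r * (θ - s)) (-r) s := by
      simpa using ((hasDerivAt_id s).const_sub θ).const_mul r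
    refine (h.exp.fun_neg.div_const r).congr_deriv ?_
    field_simp
  rw [intervalIntegral.integral_eq_sub_of_hasDerivAt hprim
    (Continuous.intervalIntegrable (by fun_prop) _ _)]
  rw [sub_zero, sub_self, mul_zero, Real.exp_zero, div_sub_div_same,
    div_le_div_iff_of_pos_right hr]
  linarith [Real.exp_pos (r * θ)]

lemma norm_cexp_mul_ofReal_smul {F : Type*} [NormedAddCommGroup F] [NormedSpace ℂ F]
    (z : ℂ) (θ : ℝ) (c : F) : ‖Complex.exp (z * θ) • c‖ = Real.exp (z.re * θ) * ‖c‖ := by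
  rw [norm_smul, Complex.norm_exp, Complex.re_mul_ofReal]

lemma hasDerivAt_cexp_mul_ofReal (z : ℂ) (θ : ℝ) :
    HasDerivAt (fun θ : ℝ => Complex.exp (z * θ)) (Complex.exp (z * θ) * z) θ := by
  simpa using ((hasDerivAt_id θ).ofReal_comp.const_mul z).cexp

section ExpConvolution

variable {F : Type*} [NormedAddCommGroup F] [NormedSpace ℝ F] [NormedSpace ℂ F]

noncomputable def expConv (z : ℂ) (φ : ℝ → F) (θ : ℝ) : F :=
  ∫ s in θ..(0:ℝ), Complex.exp (z * (θ - s)) • φ s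

lemma exp_mul_norm_expConv_le {η K : ℝ} {z : ℂ} (hz : -η < z.re) {φ : ℝ → F}
    (hK : ∀ s ≤ (0:ℝ), Real.exp (η * s) * ‖φ s‖ ≤ K) {θ : ℝ} (hθ : θ ≤ 0) :
    Real.exp (η * θ) * ‖expConv z φ θ‖ ≤ K / (η + z.re) := by
  set r := η + z.re
  have hr : 0 < r := by linarith
  have hK0 : 0 ≤ K := (by positivity : 0 ≤ Real.exp (η * 0) * ‖φ 0‖).trans (hK 0 le_rfl)
  -- the weight splits as `e^{ηθ} e^{Re z (θ-s)} = e^{r(θ-s)} e^{ηs}`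
  have hpoint : ∀ s ∈ Ioc θ 0,
      ‖Real.exp (η * θ) • (Complex.exp (z * (θ - s)) • φ s)‖ ≤ K * Real.exp (r * (θ - s)) := by
    intro s hs
    rw [norm_smul, Real.norm_of_nonneg (Real.exp_nonneg _), ← Complex.ofReal_sub,
      norm_cexp_mul_ofReal_smul, ← mul_assoc, ← Real.exp_add,
      show η * θ + z.re * (θ - s) = r * (θ - s) + η * s by ring, Real.exp_add, mul_assoc,
      mul_comm K]
    gcongr
    exact hK s hs.2
  calc Real.exp (η * θ) * ‖expConv z φ θ‖
      = ‖∫ s in θ..(0:ℝ), Real.exp (η * θ) • (Complex.exp (z * (θ - s)) • φ s)‖ := by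
        rw [intervalIntegral.integral_smul, norm_smul, Real.norm_of_nonneg (Real.exp_nonneg _),
          expConv]
    _ ≤ ∫ s in θ..(0:ℝ), K * Real.exp (r * (θ - s)) :=
        intervalIntegral.norm_integral_le_of_norm_le hθ (Filter.Eventually.of_forall hpoint)
          (Continuous.intervalIntegrable (by fun_prop) _ _)
    _ ≤ K * (1 / r) := by
        rw [intervalIntegral.integral_const_mul]
        exact mul_le_mul_of_nonneg_left (integral_exp_mul_sub_le hr θ) hK0
    _ = K / r := mul_one_div K r

variable [IsScalarTower ℝ ℂ F]

lemma expConv_eq_smul_integral (z : ℂ) (φ : ℝ → F) (θ : ℝ) :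
    expConv z φ θ = Complex.exp (z * θ) • ∫ s in θ..(0:ℝ), Complex.exp (-(z * s)) • φ s := by
  rw [expConv, ← intervalIntegral.integral_smul]
  congr 1 with s
  rw [smul_smul, ← Complex.exp_add]
  ring_nf

variable [CompleteSpace F]

lemma hasDerivAt_expConv (z : ℂ) {φ : ℝ → F} (hφ : Continuous φ) (θ : ℝ) :
    HasDerivAt (expConv z φ) (z • expConv z φ θ - φ θ) θ := by
  have hg : Continuous fun s : ℝ => Complex.exp (-(z * s)) • φ s := by fun_prop
  have hG := (intervalIntegral.integral_hasStrictDerivAt_left (hg.intervalIntegrable θ 0)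
    (hg.stronglyMeasurableAtFilter _ _) hg.continuousAt).hasDerivAt
  rw [show expConv z φ = _ from funext (expConv_eq_smul_integral z φ)]
  refine ((hasDerivAt_cexp_mul_ofReal z θ).smul hG).congr_deriv ?_
  rw [smul_neg, smul_smul, ← Complex.exp_add, add_neg_cancel, Complex.exp_zero, one_smul,
    mul_comm, ← smul_smul, sub_eq_neg_add]

lemma hasDerivWithinAt_expConv (z : ℂ) {φ : ℝ → F} (hφ : ContinuousOn φ (Iic 0)) {θ : ℝ}
    (hθ : θ ≤ 0) : HasDerivWithinAt (expConv z φ) (z • expConv z φ θ - φ θ) (Iic 0) θ := by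
  set φ₀ : ℝ → F := fun s => φ (min s 0)
  have hφ₀ : Continuous φ₀ := hφ.comp_continuous (by fun_prop) fun s => min_le_right s 0
  have heq : EqOn (expConv z φ₀) (expConv z φ) (Iic 0) := fun x hx => by
    refine intervalIntegral.integral_congr fun s hs => ?_
    rw [uIcc_of_le (mem_Iic.1 hx)] at hs
    simp only [φ₀, min_eq_left hs.2]
  have h := (hasDerivAt_expConv z hφ₀ θ).hasDerivWithinAt (s := Iic 0)
  rw [heq hθ, show φ₀ θ = φ θ by simp only [φ₀, min_eq_left hθ]] at h
  exact h.congr (fun x hx => (heq hx).symm) (heq hθ).symm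

theorem BUC1mem_expConv_add_cexp_smul {η : ℝ} {z : ℂ} (hz : -η < z.re) {φ : ℝ → F}
    (hφ : BUCmem η φ) (c : F) :
    BUC1mem η (fun θ => expConv z φ θ + Complex.exp (z * θ) • c)
      (fun θ => z • (expConv z φ θ + Complex.exp (z * θ) • c) - φ θ) := by
  set ψ : ℝ → F := fun θ => expConv z φ θ + Complex.exp (z * θ) • c
  have hderiv : ∀ θ ≤ (0:ℝ), HasDerivWithinAt ψ (z • ψ θ - φ θ) (Iic 0) θ := fun θ hθ => by
    refine ((hasDerivWithinAt_expConv z hφ.1 hθ).add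
      ((hasDerivAt_cexp_mul_ofReal z θ).smul_const c).hasDerivWithinAt).congr_deriv ?_
    rw [smul_add, mul_comm, ← smul_smul]
    abel
  have hψ : WeightedBdd η ψ := by
    obtain ⟨K, hK⟩ := weightedBdd_iff.1 hφ.2.1
    refine weightedBdd_iff.2 ⟨K / (η + z.re) + ‖c‖, fun θ hθ => ?_⟩
    have hexp : Real.exp (η * θ) * ‖Complex.exp (z * θ) • c‖ ≤ ‖c‖ := by
      rw [norm_cexp_mul_ofReal_smul, ← mul_assoc, ← Real.exp_add, ← add_mul]
      exact mul_le_of_le_one_left (norm_nonneg c)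
        (Real.exp_le_one_iff.2 (mul_nonpos_of_nonneg_of_nonpos (by linarith) hθ))
    calc Real.exp (η * θ) * ‖ψ θ‖
        ≤ Real.exp (η * θ) * ‖expConv z φ θ‖ + Real.exp (η * θ) * ‖Complex.exp (z * θ) • c‖ := by
          rw [← mul_add]; gcongr; exact norm_add_le _ _
      _ ≤ K / (η + z.re) + ‖c‖ := add_le_add (exp_mul_norm_expConv_le hz hK hθ) hexp
  have hψ' : WeightedBdd η (z • ψ - φ) := (hψ.const_smul z).sub hφ.2.1
  have hψBUC : BUCmem η ψ := BUCmem.of_hasDerivWithinAt hderiv hψ hψ'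
  exact ⟨hψBUC, (hψBUC.const_smul z).sub hφ, hderiv⟩

end ExpConvolution

lemma charMatrix_mulVec {n : ℕ} (Lhat : (ℝ → (Fin n → ℂ)) →ₗ[ℂ] (Fin n → ℂ)) (z : ℂ)
    (c : Fin n → ℂ) :
    charMatrix Lhat z *ᵥ c = z • c - Lhat (fun θ => Complex.exp (z * θ) • c) := by
  have hbasis : (fun θ : ℝ => Complex.exp (z * θ) • c) =
      ∑ j, c j • fun (θ : ℝ) (k : Fin n) => if k = j then Complex.exp (z * θ) else 0 := by
    ext θ k
    simp [Finset.sum_apply, mul_comm]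
  ext i
  simp [hbasis, charMatrix, mulVec, dotProduct, mul_sub, Finset.sum_sub_distrib, mul_comm]

theorem resolvent_A_plus_L_general (η : ℝ) (n : ℕ)
    (Lhat : (ℝ → (Fin n → ℂ)) →ₗ[ℂ] (Fin n → ℂ))
    (z : ℂ) (hz : -η < z.re) (hdet : (charMatrix Lhat z).det ≠ 0)
    (α : Fin n → ℂ) (φ : ℝ → (Fin n → ℂ)) (hφ : BUCmem η φ)
    (ψ : ℝ → (Fin n → ℂ))
    (hψ : ψ = fun θ : ℝ => (∫ s in θ..(0:ℝ), Complex.exp (z * (θ - s)) • φ s)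
        + Complex.exp (z * θ) • ((charMatrix Lhat z)⁻¹ *ᵥ
            (α + φ 0 + Lhat (fun ϑ : ℝ => ∫ s in ϑ..(0:ℝ), Complex.exp (z * (ϑ - s)) • φ s)))) :
    ∃ ψ' : ℝ → (Fin n → ℂ), BUC1mem η ψ ψ' ∧
      (∀ θ ≤ (0:ℝ), z • ψ θ - ψ' θ = φ θ) ∧ ψ' 0 = Lhat ψ + α := by
  set c := (charMatrix Lhat z)⁻¹ *ᵥ (α + φ 0 + Lhat (expConv z φ))
  replace hψ : ψ = fun θ => expConv z φ θ + Complex.exp (z * θ) • c := hψ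
  refine ⟨fun θ => z • ψ θ - φ θ, hψ ▸ BUC1mem_expConv_add_cexp_smul hz hφ c,
    fun θ _ => sub_sub_cancel _ _, ?_⟩
  have hc : z • c - Lhat (fun θ => Complex.exp (z * θ) • c) = α + φ 0 + Lhat (expConv z φ) := by
    rw [← charMatrix_mulVec, mulVec_mulVec, mul_nonsing_inv _ (isUnit_iff_ne_zero.2 hdet),
      one_mulVec]
  have hψ0 : ψ 0 = c := by simp [hψ, expConv]
  change z • ψ 0 - φ 0 = _
  rw [hψ0, sub_eq_iff_eq_add.1 hc, hψ]
  change _ = Lhat (expConv z φ + fun θ : ℝ => Complex.exp (z * θ) • c) + α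
  rw [map_add]
  abel

/-- if `Re λ > -η` and `det Δ(λ) ≠ 0`, then for every `(α,φ) ∈ ℝⁿ × BUC_η`,
`ψ(θ) = ∫_θ^0 e^{λ(θ-s)}φ(s)ds + e^{λθ}Δ(λ)^{-1}[α + φ(0) + L̂(∫_·^0 e^{λ(·-s)}φ(s)ds)]`
belongs to `BUC_η¹` and satisfies `λψ - ψ' = φ` on `(-∞,0]` and `ψ'(0) = L̂(ψ) + α`,
i.e. `(0,ψ) = (λI - (A+L))^{-1}(α,φ)`. -/
theorem resolvent_A_plus_L (η : ℝ) (hη : 0 < η) (n : ℕ)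
    (Lhat : (ℝ → (Fin n → ℂ)) →ₗ[ℂ] (Fin n → ℂ))
    (hbd : ∃ C : ℝ, ∀ φ : ℝ → (Fin n → ℂ), BUCmem η φ → ‖Lhat φ‖ ≤ C * etaNorm η φ)
    (hsupp : ∀ φ ψ : ℝ → (Fin n → ℂ), (∀ θ ≤ (0:ℝ), φ θ = ψ θ) → Lhat φ = Lhat ψ)
    (z : ℂ) (hz : -η < z.re) (hdet : (charMatrix Lhat z).det ≠ 0)
    (α : Fin n → ℂ) (φ : ℝ → (Fin n → ℂ)) (hφ : BUCmem η φ)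
    (ψ : ℝ → (Fin n → ℂ))
    (hψ : ψ = fun θ : ℝ => (∫ s in θ..(0:ℝ), Complex.exp (z * (θ - s)) • φ s)
        + Complex.exp (z * θ) • ((charMatrix Lhat z)⁻¹ *ᵥ
            (α + φ 0 + Lhat (fun ϑ : ℝ => ∫ s in ϑ..(0:ℝ), Complex.exp (z * (ϑ - s)) • φ s)))) :
    ∃ ψ' : ℝ → (Fin n → ℂ), BUC1mem η ψ ψ' ∧
      (∀ θ ≤ (0:ℝ), z • ψ θ - ψ' θ = φ θ) ∧ ψ' 0 = Lhat ψ + α :=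
  resolvent_A_plus_L_general η n Lhat z hz hdet α φ hφ ψ hψ
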